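/- Let ℜ be a nonempty loc-deterministic set of P-rules satisfying Assumptions 1 and 2 in which every constant occurs. Let λ be a symbolic heap and (s,h) an ℜ-model of λ. For every ℓ ∈ ref(h), there exists x ∈ alloc(λ) such that s(x) →_h* ℓ. -/

import Mathlib

open scoped Classical

namespace SLID

/-! ## Signatures, terms and formulas -/

/-- A signature: a set of sorts with a distinguished sort `loc` of memory locations,
predicate symbols with profiles (the first parameter being of sort `loc`),
and constants of each sort (no constants of sort `loc`). -/
structure Sig : Type 1 where
  Srt : Type
  loc : Srt
  Pred : Type
  arity : Pred → ℕ
  arity_pos : ∀ p, 0 < arity p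
  psort : Pred → ℕ → Srt
  psort_zero : ∀ p, psort p 0 = loc
  Const : Srt → Type
  noLocConst : IsEmpty (Const loc)

variable {σ : Sig}

/-- Terms: variables of each sort (a countably infinite supply, indexed by `ℕ`)
and constants. -/
inductive Term (σ : Sig) : Type where
  | var (s : σ.Srt) (n : ℕ) : Term σ
  | cst (s : σ.Srt) (c : σ.Const s) : Term σ

/-- The sort of a term. -/
def Term.sort : Term σ → σ.Srt
  | .var s _ => s
  | .cst s _ => s

/-- Variables, as (sort, index) pairs. -/
abbrev Vr (σ : Sig) : Type := σ.Srt × ℕ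

/-- The set of variables of a term. -/
def Term.varSet : Term σ → Set (Vr σ)
  | .var s n => {(s, n)}
  | .cst _ _ => ∅

/-- Spatial atoms: points-to atoms `x ↦ (t₁,…,tₖ)` and predicate atoms
`p(x, t₂,…,tₙ)`.  The root `x` is a variable of sort `loc`, represented
by its index. -/
inductive SAtom (σ : Sig) : Type where
  | pto (x : ℕ) (ts : List (Term σ)) : SAtom σ
  | pred (p : σ.Pred) (x : ℕ) (args : List (Term σ)) : SAtom σ

/-- The root of a spatial atom. -/
def SAtom.root : SAtom σ → ℕ
  | .pto x _ => x
  | .pred _ x _ => x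

/-- The term at position `i` (0-indexed; position `0` is the root) of a
predicate atom. -/
def SAtom.argAt : SAtom σ → ℕ → Option (Term σ)
  | .pred _ x _, 0 => some (Term.var σ.loc x)
  | .pred _ _ args, j + 1 => args[j]?
  | .pto _ _, _ => none

/-- The set of terms occurring in a spatial atom. -/
def SAtom.termSet : SAtom σ → Set (Term σ)
  | .pto x ts => insert (Term.var σ.loc x) {t | t ∈ ts}
  | .pred _ x args => insert (Term.var σ.loc x) {t | t ∈ args}

/-- The set of variables of a spatial atom. -/
def SAtom.varSet (a : SAtom σ) : Set (Vr σ) := ⋃ t ∈ SAtom.termSet a, Term.varSet t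

/-- Pure atoms: equations `t ≈ u` and disequations `t ≉ u`. -/
inductive PAtom (σ : Sig) : Type where
  | eq (t u : Term σ) : PAtom σ
  | ne (t u : Term σ) : PAtom σ

/-- The set of terms occurring in a pure atom. -/
def PAtom.termSet : PAtom σ → Set (Term σ)
  | .eq t u => {t, u}
  | .ne t u => {t, u}

/-- The set of variables of a pure atom. -/
def PAtom.varSet (a : PAtom σ) : Set (Vr σ) := ⋃ t ∈ PAtom.termSet a, Term.varSet t

/-- Spatial formulas: finite `*`-conjunctions of spatial atoms, taken modulo
associativity-commutativity of `*` (hence multisets); `emp` is `0` and `*` is `+`. -/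
abbrev Spatial (σ : Sig) : Type := Multiset (SAtom σ)

/-- Pure formulas: finite conjunctions of equations and disequations, taken modulo
associativity-commutativity of `∧` (hence multisets); `⊤` is `0` and `∧` is `+`. -/
abbrev PureF (σ : Sig) : Type := Multiset (PAtom σ)

/-- A symbolic heap `φ ⋏ ξ` with `φ` spatial and `ξ` pure. -/
structure SymHeap (σ : Sig) : Type where
  sp : Spatial σ
  pu : PureF σ

/-- The set of variables of a spatial formula. -/
def Spatial.varSet (φ : Spatial σ) : Set (Vr σ) := {v | ∃ a ∈ φ, v ∈ SAtom.varSet a}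

/-- The set of variables of a pure formula. -/
def PureF.varSet (ξ : PureF σ) : Set (Vr σ) := {v | ∃ a ∈ ξ, v ∈ PAtom.varSet a}

/-- The set of variables of a symbolic heap. -/
def SymHeap.varSet (l : SymHeap σ) : Set (Vr σ) := Spatial.varSet l.sp ∪ PureF.varSet l.pu

/-- The set of terms occurring in a symbolic heap. -/
def SymHeap.termSet (l : SymHeap σ) : Set (Term σ) :=
  {t | ∃ a ∈ l.sp, t ∈ SAtom.termSet a} ∪ {t | ∃ a ∈ l.pu, t ∈ PAtom.termSet a}

/-- `alloc(φ)`: the multiset of roots of the spatial atoms of `φ`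
(as indices of variables of sort `loc`). -/
def alloc (φ : Spatial σ) : Multiset ℕ := φ.map SAtom.root

/-- `alloc(λ)` for a symbolic heap `λ`. -/
def SymHeap.alloc (l : SymHeap σ) : Multiset ℕ := SLID.alloc l.sp

/-- Sort-correctness of a pure atom. -/
def PAtom.WF : PAtom σ → Prop
  | .eq t u => Term.sort t = Term.sort u
  | .ne t u => Term.sort t = Term.sort u

/-- Sort-correctness of a spatial atom. -/
def SAtom.WF : SAtom σ → Prop
  | .pto _ _ => True
  | .pred p _ args => args.length + 1 = σ.arity p ∧
      ∀ (i : ℕ) (hi : i < args.length), Term.sort (args[i]'hi) = σ.psort p (i + 1)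

/-- Sort-correctness of a symbolic heap. -/
def SymHeap.WF (l : SymHeap σ) : Prop := (∀ a ∈ l.sp, SAtom.WF a) ∧ (∀ a ∈ l.pu, PAtom.WF a)

/-! ## Inductive rules -/

/-- An inductive rule `p(x₁,…,xₙ) ⇐ λ`: the parameters `x₁,…,xₙ` are pairwise
distinct variables of the profile sorts of the head `p`, and the body `λ` is a
symbolic heap. -/
structure Rule (σ : Sig) : Type where
  head : σ.Pred
  param : ℕ → ℕ
  param_inj : ∀ i j, i < σ.arity head → j < σ.arity head → i ≠ j →
    ((σ.psort head i, param i) : Vr σ) ≠ ((σ.psort head j, param j) : Vr σ)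
  body : SymHeap σ
  body_wf : SymHeap.WF body

/-- The `i`-th parameter of a rule, as a term. -/
def Rule.paramTerm (r : Rule σ) (i : ℕ) : Term σ := Term.var (σ.psort r.head i) (r.param i)

/-- The set of parameters of a rule, as terms. -/
def Rule.paramTermSet (r : Rule σ) : Set (Term σ) := {t | ∃ i < σ.arity r.head, t = r.paramTerm i}

/-- The set of parameters of a rule, as variables. -/
def Rule.paramVarSet (r : Rule σ) : Set (Vr σ) :=
  {v | ∃ i < σ.arity r.head, v = ((σ.psort r.head i, r.param i) : Vr σ)}

/-- The set of terms occurring in (the body of) a rule. -/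
def Rule.termSet (r : Rule σ) : Set (Term σ) := SymHeap.termSet r.body

/-- P-rules: rules of the form
`p(x₁,…,xₙ) ⇐ (x₁ ↦ (y₁,…,yₖ) * q₁(z₁,u⃗₁) * ⋯ * qₘ(zₘ,u⃗ₘ)) ⋏ ξ` where
(1) `ξ` is a conjunction of disequations `u ≉ v` with `u ∈ {x₁,…,xₙ,y₁,…,yₖ}`
    and `v ∈ {y₁,…,yₖ} ∖ {x₁,…,xₙ}`;
(2) `{z₁,…,zₘ} = ({y₁,…,yₖ} ∖ {x₁,…,xₙ}) ∩ V_loc`, with `z₁,…,zₘ` pairwise distinct;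
(3) every element of each `u⃗ᵢ` is a parameter, one of the `yⱼ`, or a constant. -/
def Rule.IsPRule (r : Rule σ) : Prop :=
  ∃ (ys : List (Term σ)) (ps : Multiset (SAtom σ)),
    r.body.sp = (SAtom.pto (r.param 0) ys) ::ₘ ps ∧
    (∀ a ∈ ps, ∃ (q : σ.Pred) (z : ℕ) (args : List (Term σ)), a = SAtom.pred q z args) ∧
    (∀ pa ∈ r.body.pu, ∃ u v : Term σ, pa = PAtom.ne u v ∧
      (u ∈ Rule.paramTermSet r ∨ u ∈ ys) ∧ (v ∈ ys ∧ v ∉ Rule.paramTermSet r)) ∧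
    ({t : Term σ | ∃ a ∈ ps, t = Term.var σ.loc (SAtom.root a)} =
      {t : Term σ | t ∈ ys ∧ t ∉ Rule.paramTermSet r ∧ Term.sort t = σ.loc}) ∧
    Multiset.Nodup (Multiset.map SAtom.root ps) ∧
    (∀ a ∈ ps, ∀ (q : σ.Pred) (z : ℕ) (args : List (Term σ)), a = SAtom.pred q z args →
      ∀ t ∈ args, t ∈ Rule.paramTermSet r ∨ t ∈ ys ∨ ∃ (s : σ.Srt) (c : σ.Const s), t = Term.cst s c)

/-- Productive predicate symbols (least fixpoint): `p` is productive w.r.t. `R`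
if `R` contains a rule for `p` all of whose body predicates are productive. -/
inductive Productive (R : Set (Rule σ)) : σ.Pred → Prop where
  | intro (r : Rule σ) : r ∈ R →
      (∀ (q : σ.Pred) (z : ℕ) (args : List (Term σ)),
        SAtom.pred q z args ∈ r.body.sp → Productive R q) →
      Productive R r.head

/-- `out_ℜ(p)` (0-indexed): outgoing parameter indices, as a least fixpoint. -/
inductive OutParam (R : Set (Rule σ)) : σ.Pred → ℕ → Prop where
  | pto (r : Rule σ) (i : ℕ) (ts : List (Term σ)) :
      r ∈ R → i < σ.arity r.head → σ.psort r.head i = σ.loc →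
      SAtom.pto (r.param 0) ts ∈ r.body.sp → r.paramTerm i ∈ ts →
      OutParam R r.head i
  | pred (r : Rule σ) (i : ℕ) (q : σ.Pred) (z : ℕ) (args : List (Term σ)) (j : ℕ) :
      r ∈ R → i < σ.arity r.head → σ.psort r.head i = σ.loc →
      SAtom.pred q z args ∈ r.body.sp → OutParam R q j →
      SAtom.argAt (SAtom.pred q z args) j = some (r.paramTerm i) →
      OutParam R r.head i

/-- The relation `x →_φ y` on variables of sort `loc` (Definition of `→`):
`φ` contains a predicate atom with root `x` and `y` at an outgoing position,
or a points-to atom with root `x` and `y` in its tuple. -/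
def PathTo (R : Set (Rule σ)) (φ : Spatial σ) (x y : ℕ) : Prop :=
  (∃ ts, SAtom.pto x ts ∈ φ ∧ Term.var σ.loc y ∈ ts) ∨
  (∃ (p : σ.Pred) (args : List (Term σ)) (i : ℕ), SAtom.pred p x args ∈ φ ∧
    OutParam R p i ∧ SAtom.argAt (SAtom.pred p x args) i = some (Term.var σ.loc y))

/-! ## Substitutions and renamings -/

/-- A (sort-preserving) substitution. -/
structure Subst (σ : Sig) : Type where
  app : σ.Srt → ℕ → Term σ
  sorted : ∀ s n, Term.sort (app s n) = s

def Term.subst (θ : Subst σ) : Term σ → Term σ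
  | .var s n => θ.app s n
  | .cst s c => .cst s c

/-- The index of a variable of sort `loc` (terms of sort `loc` are always
variables, since there are no constants of sort `loc`). -/
def Term.locIdx : Term σ → ℕ
  | .var _ n => n
  | .cst _ _ => 0

def Subst.locApp (θ : Subst σ) (x : ℕ) : ℕ := Term.locIdx (θ.app σ.loc x)

def SAtom.subst (θ : Subst σ) : SAtom σ → SAtom σ
  | .pto x ts => .pto (θ.locApp x) (ts.map (Term.subst θ))
  | .pred p x args => .pred p (θ.locApp x) (args.map (Term.subst θ))

def PAtom.subst (θ : Subst σ) : PAtom σ → PAtom σ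
  | .eq t u => .eq (Term.subst θ t) (Term.subst θ u)
  | .ne t u => .ne (Term.subst θ t) (Term.subst θ u)

def SymHeap.subst (θ : Subst σ) (l : SymHeap σ) : SymHeap σ :=
  ⟨l.sp.map (SAtom.subst θ), l.pu.map (PAtom.subst θ)⟩

/-- `p(t₁,…,tₙ) ⇐_ℜ λ`: `λ` is obtained from the body of a rule of `R` for `p`
by renaming its non-parameter variables injectively to variables not occurring in
`t₁,…,tₙ`, and substituting each `tᵢ` for the `i`-th parameter. -/
def Unfolds (R : Set (Rule σ)) (p : σ.Pred) (targs : List (Term σ)) (lam : SymHeap σ) : Prop :=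
  ∃ r ∈ R, r.head = p ∧ targs.length = σ.arity p ∧
  ∃ θ : Subst σ,
    (∀ (i : ℕ) (hi : i < targs.length),
      θ.app (σ.psort p i) (r.param i) = targs[i]'hi) ∧
    (∀ v : Vr σ, v ∉ Rule.paramVarSet r →
      ∃ m : ℕ, θ.app v.1 v.2 = Term.var v.1 m ∧ ∀ t ∈ targs, (v.1, m) ∉ Term.varSet t) ∧
    (∀ v w : Vr σ, v ∉ Rule.paramVarSet r → w ∉ Rule.paramVarSet r →
      θ.app v.1 v.2 = θ.app w.1 w.2 → v = w) ∧
    lam = SymHeap.subst θ r.body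

/-- Equivalence of symbolic heaps up to an injective renaming of variables fixing
the variables in `F`. -/
def VarRenEquiv (F : Set (Vr σ)) (l1 l2 : SymHeap σ) : Prop :=
  ∃ θ : Subst σ,
    (∀ v : Vr σ, ∃ m : ℕ, θ.app v.1 v.2 = Term.var v.1 m) ∧
    (∀ v w : Vr σ, θ.app v.1 v.2 = θ.app w.1 w.2 → v = w) ∧
    (∀ v ∈ F, θ.app v.1 v.2 = Term.var v.1 v.2) ∧
    l2 = SymHeap.subst θ l1

/-! ## Interpretations, stores and heaps -/

/-- An interpretation: pairwise disjoint countably infinite universes (one per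
sort; disjointness is by construction of `Interp.Val`) together with an injective
interpretation of the constants. -/
structure Interp (σ : Sig) : Type 1 where
  U : σ.Srt → Type
  countable : ∀ s, Countable (U s)
  infinite : ∀ s, Infinite (U s)
  cval : {s : σ.Srt} → σ.Const s → U s
  cval_inj : ∀ s : σ.Srt, Function.Injective (fun c : σ.Const s => cval c)

/-- The universe `𝔘_loc` of locations. -/
abbrev Interp.Loc {σ : Sig} (I : Interp σ) : Type := I.U σ.loc

/-- The global universe `𝔘` (disjoint union of the sort universes). -/
abbrev Interp.Val {σ : Sig} (I : Interp σ) : Type := Σ s : σ.Srt, I.U s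

/-- A store maps every variable to an element of the universe of its sort
(constants are interpreted by `cval`, see `tval`). -/
abbrev Store {σ : Sig} (I : Interp σ) : Type := ∀ s : σ.Srt, ℕ → I.U s

section Stores

variable {I : Interp σ}

/-- The value of a term under a store. -/
def tval (st : Store I) : Term σ → I.Val
  | .var s n => ⟨s, st s n⟩
  | .cst s c => ⟨s, I.cval c⟩

/-- The value of a term under a store, typed by the sort of the term. -/
def tvalSorted (st : Store I) : (t : Term σ) → I.U (Term.sort t)
  | .var s n => st s n
  | .cst _ c => I.cval c

end Stores

/-- Heaps: finite partial maps from locations to finite tuples of values. -/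
def Heap {σ : Sig} (I : Interp σ) : Type :=
  { f : I.Loc → Option (List I.Val) // {l : I.Loc | f l ≠ none}.Finite }

namespace Heap

variable {I : Interp σ}

/-- The domain of a heap (the set of allocated locations). -/
def dom (h : Heap I) : Set I.Loc := {l | h.1 l ≠ none}

/-- The empty heap. -/
def empty (I : Interp σ) : Heap I :=
  ⟨fun _ => none, by
    have : {l : I.Loc | (none : Option (List I.Val)) ≠ none} = ∅ := by
      ext l; simp
    rw [this]; exact Set.finite_empty⟩

/-- Disjointness of heaps. -/
def Disj (h1 h2 : Heap I) : Prop := dom h1 ∩ dom h2 = ∅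

/-- Union of heaps (used on disjoint heaps, where it is the disjoint union `⊎`). -/
def union (h1 h2 : Heap I) : Heap I :=
  ⟨fun l => (h1.1 l).orElse fun _ => h2.1 l, by
    apply (h1.2.union h2.2).subset
    intro l hl
    simp only [Set.mem_setOf_eq] at hl
    simp only [Set.mem_union, Set.mem_setOf_eq]
    rcases e1 : h1.1 l with _ | vs
    · right
      intro e2
      rw [e1, e2] at hl
      exact hl rfl
    · left
      simp [e1]⟩

/-- The one-point heap `{l ↦ vs}`. -/
noncomputable def single (l : I.Loc) (vs : List I.Val) : Heap I :=
  ⟨fun l' => if l' = l then some vs else none, by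
    apply (Set.finite_singleton l).subset
    intro x hx
    simp only [Set.mem_setOf_eq] at hx
    simp only [Set.mem_singleton_iff]
    by_contra hne
    rw [if_neg hne] at hx
    exact hx rfl⟩

/-- `h1 ⊆ h2`: `h2 = h1 ⊎ h3` for some heap `h3` disjoint from `h1`. -/
def Sub (h1 h2 : Heap I) : Prop := ∃ h3 : Heap I, Disj h1 h3 ∧ h2 = union h1 h3

/-- The relation `ℓ →_h ℓ'`: `ℓ ∈ dom(h)` and `ℓ'` is a component (of sort `loc`)
of the tuple `h(ℓ)`. -/
def conn (h : Heap I) (l l' : I.Loc) : Prop :=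
  ∃ vs, h.1 l = some vs ∧ (⟨σ.loc, l'⟩ : I.Val) ∈ vs

/-- `ref(h)`: the set of locations occurring in `h` (allocated or referred to). -/
def ref (h : Heap I) : Set I.Loc :=
  dom h ∪ {l | ∃ l0 vs, h.1 l0 = some vs ∧ (⟨σ.loc, l⟩ : I.Val) ∈ vs}

end Heap

section PureSem

variable {I : Interp σ}

/-- Satisfaction of a pure atom (depends only on the store). -/
def PAtom.holds (st : Store I) : PAtom σ → Prop
  | .eq t u => tval st t = tval st u
  | .ne t u => tval st t ≠ tval st u

/-- Satisfaction of a pure formula (depends only on the store). -/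
def pureHolds (st : Store I) (ξ : PureF σ) : Prop := ∀ a ∈ ξ, PAtom.holds st a

/-- The store `s ∘ σ` mapping every variable `x` to `s(σ(x))`. -/
def Store.comp (st : Store I) (θ : Subst σ) : Store I :=
  fun s n => (θ.sorted s n) ▸ tvalSorted st (θ.app s n)

end PureSem

/-! ## Satisfaction -/

mutual
  /-- Satisfaction of a single spatial atom; predicate atoms are interpreted by
  unfolding with the rules of `R` (least fixpoint). -/
  inductive SatA (R : Set (Rule σ)) (I : Interp σ) : Store I → Heap I → SAtom σ → Prop where
    | pto (st : Store I) (x : ℕ) (ts : List (Term σ)) :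
        SatA R I st (Heap.single (st σ.loc x) (ts.map (tval st))) (SAtom.pto x ts)
    | pred (st : Store I) (h : Heap I) (p : σ.Pred) (x : ℕ) (args : List (Term σ))
        (r : Rule σ) (st' : Store I) :
        r ∈ R → r.head = p →
        tval st' (r.paramTerm 0) = tval st (Term.var σ.loc x) →
        (∀ (i : ℕ) (hi : i < args.length),
          tval st' (r.paramTerm (i + 1)) = tval st (args[i]'hi)) →
        SatS R I st' h r.body.sp →
        pureHolds st' r.body.pu →
        SatA R I st h (SAtom.pred p x args)

  /-- Satisfaction of a spatial formula: the heap splits into disjoint parts,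
  one per atom. -/
  inductive SatS (R : Set (Rule σ)) (I : Interp σ) : Store I → Heap I → Spatial σ → Prop where
    | emp (st : Store I) : SatS R I st (Heap.empty I) 0
    | cons (st : Store I) (h1 h2 : Heap I) (a : SAtom σ) (φ : Spatial σ) :
        SatA R I st h1 a → SatS R I st h2 φ → Heap.Disj h1 h2 →
        SatS R I st (Heap.union h1 h2) (a ::ₘ φ)
end

/-- Satisfaction `(s,h) ⊨_ℜ φ ⋏ ξ` of a symbolic heap. -/
def SatH (R : Set (Rule σ)) (I : Interp σ) (st : Store I) (h : Heap I) (l : SymHeap σ) : Prop :=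
  SatS R I st h l.sp ∧ pureHolds st l.pu

/-! ## Classes of rule sets -/

/-- A deterministic set of rules: two distinct rules with the same head never
overlap (the conjunction of the equations identifying their parameters and
points-to tuples with their pure constraints is unsatisfiable; the two rules
are renamed apart, whence the two independent stores). -/
def Deterministic (R : Set (Rule σ)) (I : Interp σ) : Prop :=
  ∀ r1 ∈ R, ∀ r2 ∈ R, r1 ≠ r2 → r1.head = r2.head →
  ∀ (ys1 : List (Term σ)) (ps1 : Multiset (SAtom σ))
    (ys2 : List (Term σ)) (ps2 : Multiset (SAtom σ)),
    r1.body.sp = (SAtom.pto (r1.param 0) ys1) ::ₘ ps1 →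
    r2.body.sp = (SAtom.pto (r2.param 0) ys2) ::ₘ ps2 →
    ¬ ∃ st1 st2 : Store I,
      (∀ i < σ.arity r1.head, tval st1 (r1.paramTerm i) = tval st2 (r2.paramTerm i)) ∧
      ys1.map (tval st1) = ys2.map (tval st2) ∧
      pureHolds st1 r1.body.pu ∧ pureHolds st2 r2.body.pu

/-- The standing hypotheses: `R` is a nonempty loc-deterministic set of P-rules
satisfying Assumptions 1 (every predicate is productive) and 2 (every loc-sorted
parameter index `i ≥ 2`, here 0-indexed `i ≥ 1`, is an outgoing parameter index),
in which every constant occurs. -/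
structure GoodRules (R : Set (Rule σ)) (I : Interp σ) : Prop where
  nonempty : R.Nonempty
  prules : ∀ r ∈ R, Rule.IsPRule r
  deterministic : Deterministic R I
  loc_diseq : ∀ r ∈ R, ∀ pa ∈ r.body.pu,
    ∃ x y : ℕ, pa = PAtom.ne (Term.var σ.loc x) (Term.var σ.loc y)
  productive : ∀ p : σ.Pred, Productive R p
  out_total : ∀ (p : σ.Pred) (i : ℕ), 1 ≤ i → i < σ.arity p → σ.psort p i = σ.loc →
    OutParam R p i
  const_occurs : ∀ (s : σ.Srt) (c : σ.Const s), ∃ r ∈ R, Term.cst s c ∈ Rule.termSet r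

/-! ## Sequents -/

/-- A sequent `λ ⊢_ℜ^V γ`. -/
structure Sequent (σ : Sig) : Type where
  lhs : SymHeap σ
  rhs : SymHeap σ
  V : Multiset ℕ

/-- A store is injective on a multiset `V` of loc-variables:
`{x,y} ⊆ₘ V → s(x) ≠ s(y)`. -/
def StoreInjOn {I : Interp σ} (st : Store I) (V : Multiset ℕ) : Prop :=
  ∀ x y : ℕ, ({x, y} : Multiset ℕ) ≤ V → st σ.loc x ≠ st σ.loc y

/-- A counter-model of a sequent. -/
def CounterModel (R : Set (Rule σ)) (I : Interp σ) (S : Sequent σ)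
    (st : Store I) (h : Heap I) : Prop :=
  SatH R I st h S.lhs ∧ ¬ SatH R I st h S.rhs ∧
  (∀ x ∈ S.V, st σ.loc x ∉ Heap.dom h) ∧ StoreInjOn st S.V

/-- Validity of a sequent: no counter-model. -/
def SeqValid (R : Set (Rule σ)) (I : Interp σ) (S : Sequent σ) : Prop :=
  ¬ ∃ (st : Store I) (h : Heap I), CounterModel R I S st h

/-- Axioms (modulo AC): `φ ⋏ (ξ ∧ ξ') ⊢ φ ⋏ ξ`; `φ ⋏ (ξ ∧ x ≉ x) ⊢ γ`;
a heap-unsatisfiable left-hand side; an allocated variable in `V`, or a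
repeated variable in `V`. -/
def IsAxiom (S : Sequent σ) : Prop :=
  (S.lhs.sp = S.rhs.sp ∧ ∀ a ∈ S.rhs.pu, a ∈ S.lhs.pu) ∨
  (∃ v : Vr σ, PAtom.ne (Term.var v.1 v.2) (Term.var v.1 v.2) ∈ S.lhs.pu) ∨
  (¬ (alloc S.lhs.sp).Nodup) ∨
  (∃ x ∈ alloc S.lhs.sp, x ∈ S.V) ∨
  (¬ S.V.Nodup)

/-- The relation `λ ▷_V ξ` (Definition of `▷`). -/
def Entails (lam : SymHeap σ) (V : Multiset ℕ) (ξ : PureF σ) : Prop :=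
  ∀ ζ ∈ ξ,
    ζ ∈ lam.pu ∨
    (∃ v : Vr σ, ζ = PAtom.eq (Term.var v.1 v.2) (Term.var v.1 v.2)) ∨
    (∃ (s1 : σ.Srt) (c1 : σ.Const s1) (s2 : σ.Srt) (c2 : σ.Const s2),
      ζ = PAtom.ne (Term.cst s1 c1) (Term.cst s2 c2) ∧ Term.cst s1 c1 ≠ Term.cst s2 c2) ∨
    (∃ x1 x2 : ℕ, ζ = PAtom.ne (Term.var σ.loc x1) (Term.var σ.loc x2) ∧
      ({x1, x2} : Multiset ℕ) ≤ SymHeap.alloc lam + V)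

/-- A `→`-compatible model of a spatial formula. -/
def PathCompatible (R : Set (Rule σ)) (I : Interp σ) (st : Store I) (h : Heap I)
    (φ : Spatial σ) : Prop :=
  SatS R I st h φ ∧
  ∀ x y : ℕ, Relation.ReflTransGen (Heap.conn h) (st σ.loc x) (st σ.loc y) →
    Relation.ReflTransGen (PathTo R φ) x y

/-! ## 𝔘-mappings -/

/-- A `𝔘`-mapping: a sort-preserving map on the universe fixing the
interpretations of constants. -/
structure UMap {σ : Sig} (I : Interp σ) : Type where
  f : ∀ s : σ.Srt, I.U s → I.U s
  fix_const : ∀ (s : σ.Srt) (c : σ.Const s), f s (I.cval c) = I.cval c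

/-- A `𝔘`-mapping, as a map on `𝔘`. -/
def UMap.onVal {σ : Sig} {I : Interp σ} (ν : UMap I) : I.Val → I.Val :=
  fun v => ⟨v.1, ν.f v.1 v.2⟩

/-- The store `ν ∘ s`. -/
def UMap.compStore {σ : Sig} {I : Interp σ} (ν : UMap I) (st : Store I) : Store I :=
  fun s n => ν.f s (st s n)

/-!
Every location of a model is reachable from an allocated root, by induction on satisfaction.
A points-to atom is a single cell whose contents hang off its root. A predicate atom is unfolded
by a P-rule, whose body consists of a points-to atom at the root together with predicate atoms
rooted at fresh variables of that points-to tuple; so the root cell points to the root of every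
other body atom, and by induction everything in their heaps is reachable from there. A separating
conjunction splits the heap into disjoint parts whose cells survive in the union.
-/

namespace Heap

variable {I : Interp σ}

lemma single_apply_self (l : I.Loc) (vs : List I.Val) : (single l vs).1 l = some vs := by
  simp [single]

lemma union_apply_of_left {h1 h2 : Heap I} {l : I.Loc} {vs : List I.Val}
    (h : h1.1 l = some vs) : (union h1 h2).1 l = some vs := by
  simp [union, h, Option.orElse]

lemma union_apply_of_right {h1 h2 : Heap I} (hd : Disj h1 h2) {l : I.Loc} {vs : List I.Val}
    (h : h2.1 l = some vs) : (union h1 h2).1 l = some vs := by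
  have h1l : h1.1 l = none := by
    by_contra hne
    have : l ∈ dom h1 ∩ dom h2 := ⟨hne, by simp [dom, h]⟩
    rwa [hd] at this
  simp [union, h1l, h, Option.orElse]

lemma union_apply_eq_some {h1 h2 : Heap I} {l : I.Loc} {vs : List I.Val}
    (h : (union h1 h2).1 l = some vs) : h1.1 l = some vs ∨ h2.1 l = some vs := by
  rcases e1 : h1.1 l with _ | vs1
  · right; simpa [union, e1, Option.orElse] using h
  · exact Or.inl ((union_apply_of_left e1).symm.trans h)

lemma conn_union_of_left {h1 h2 : Heap I} {l l' : I.Loc} (h : conn h1 l l') :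
    conn (union h1 h2) l l' :=
  let ⟨vs, hv, hm⟩ := h; ⟨vs, union_apply_of_left hv, hm⟩

lemma conn_union_of_right {h1 h2 : Heap I} (hd : Disj h1 h2) {l l' : I.Loc}
    (h : conn h2 l l') : conn (union h1 h2) l l' :=
  let ⟨vs, hv, hm⟩ := h; ⟨vs, union_apply_of_right hd hv, hm⟩

lemma ref_union_subset (h1 h2 : Heap I) : ref (union h1 h2) ⊆ ref h1 ∪ ref h2 := by
  rintro l (hdom | ⟨l0, vs, hv, hm⟩)
  · obtain ⟨vs, hv⟩ := Option.ne_none_iff_exists'.1 hdom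
    exact (union_apply_eq_some hv).imp (fun e => Or.inl (by simp [dom, e]))
      (fun e => Or.inl (by simp [dom, e]))
  · exact (union_apply_eq_some hv).imp (fun e => Or.inr ⟨l0, vs, e, hm⟩)
      (fun e => Or.inr ⟨l0, vs, e, hm⟩)

lemma notMem_ref_empty (l : I.Loc) : l ∉ ref (empty I) := by
  rintro (hdom | ⟨l0, vs, hv, -⟩)
  · exact hdom rfl
  · simp [empty] at hv

lemma reflTransGen_conn_single {l0 l : I.Loc} {vs : List I.Val} (hl : l ∈ ref (single l0 vs)) :
    Relation.ReflTransGen (conn (single l0 vs)) l0 l := by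
  rcases hl with hdom | ⟨l1, ws, hw, hm⟩
  · by_cases he : l = l0
    · rw [he]
    · simp [dom, single, he] at hdom
  · by_cases he : l1 = l0
    · subst he
      exact .single ⟨ws, hw, hm⟩
    · simp [single, he] at hw

end Heap

section Reachability

variable {I : Interp σ} {R : Set (Rule σ)}

lemma SatS.apply_root_of_pto_mem {st : Store I} {h : Heap I} {φ : Spatial σ}
    (hs : SatS R I st h φ) {x : ℕ} {ts : List (Term σ)} (hm : SAtom.pto x ts ∈ φ) :
    h.1 (st σ.loc x) = some (ts.map (tval st)) :=
  match hs, hm with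
  | .cons st h1 h2 a φ ha hφ hd, hm =>
    match Multiset.mem_cons.1 hm with
    | .inl rfl => by
      cases ha
      exact Heap.union_apply_of_left (Heap.single_apply_self _ _)
    | .inr hmem => Heap.union_apply_of_right hd (hφ.apply_root_of_pto_mem hmem)

lemma Rule.tval_paramTerm_zero (r : Rule σ) (st : Store I) :
    tval st (r.paramTerm 0) = ⟨σ.loc, st σ.loc (r.param 0)⟩ := by
  simp only [Rule.paramTerm, σ.psort_zero, tval]

lemma Rule.IsPRule.reflTransGen_conn_param_zero {r : Rule σ} (hr : r.IsPRule) {st : Store I}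
    {h : Heap I} (hbody : SatS R I st h r.body.sp) {z : ℕ} (hz : z ∈ alloc r.body.sp) :
    Relation.ReflTransGen (Heap.conn h) (st σ.loc (r.param 0)) (st σ.loc z) := by
  obtain ⟨ys, ps, hsp, -, -, hroots, -⟩ := hr
  obtain ⟨a, ha, rfl⟩ := Multiset.mem_map.1 hz
  rw [hsp, Multiset.mem_cons] at ha
  rcases ha with rfl | ha
  · exact .refl
  have hys : Term.var σ.loc a.root ∈ ys :=
    (hroots.subset (show _ ∈ {t | ∃ a ∈ ps, t = _} from ⟨a, ha, rfl⟩)).1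
  have hcell : h.1 (st σ.loc (r.param 0)) = some (ys.map (tval st)) :=
    hbody.apply_root_of_pto_mem (by rw [hsp]; exact Multiset.mem_cons_self _ _)
  exact .single ⟨_, hcell, List.mem_map_of_mem hys⟩

mutual

theorem SatA.reflTransGen_conn_root (hP : ∀ r ∈ R, r.IsPRule) {st : Store I} {h : Heap I}
    {a : SAtom σ} : SatA R I st h a →
    ∀ l ∈ Heap.ref h, Relation.ReflTransGen (Heap.conn h) (st σ.loc a.root) l
  | .pto st x ts => fun l hl => Heap.reflTransGen_conn_single hl
  | .pred st h p x args r st' hr _ h0 _ hbody _ => fun l hl => by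
    obtain ⟨z, hz, hreach⟩ := SatS.exists_mem_alloc_reflTransGen_conn hP hbody l hl
    have hroot : st σ.loc x = st' σ.loc (r.param 0) := by
      rw [r.tval_paramTerm_zero, tval] at h0
      exact eq_of_heq (Sigma.mk.inj h0).2.symm
    rw [SAtom.root, hroot]
    exact ((hP r hr).reflTransGen_conn_param_zero hbody hz).trans hreach

theorem SatS.exists_mem_alloc_reflTransGen_conn (hP : ∀ r ∈ R, r.IsPRule) {st : Store I}
    {h : Heap I} {φ : Spatial σ} : SatS R I st h φ →
    ∀ l ∈ Heap.ref h, ∃ x ∈ alloc φ, Relation.ReflTransGen (Heap.conn h) (st σ.loc x) l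
  | .emp st => fun l hl => absurd hl (Heap.notMem_ref_empty l)
  | .cons st h1 h2 a φ ha hφ hd => fun l hl => by
    rcases Heap.ref_union_subset h1 h2 hl with hl1 | hl2
    · exact ⟨a.root, by simp [alloc], Relation.ReflTransGen.mono
        (fun _ _ => Heap.conn_union_of_left) _ _ (SatA.reflTransGen_conn_root hP ha l hl1)⟩
    · obtain ⟨x, hx, hreach⟩ := SatS.exists_mem_alloc_reflTransGen_conn hP hφ l hl2
      exact ⟨x, by simp_all [alloc], Relation.ReflTransGen.mono
        (fun _ _ => Heap.conn_union_of_right hd) _ _ hreach⟩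

end

end Reachability

/-- if `(s,h)` is an `ℜ`-model of a symbolic heap `λ`, then every
`ℓ ∈ ref(h)` is reachable (via `→_h*`) from `s(x)` for some `x ∈ alloc(λ)`. -/
theorem STATEMENT_6 {σ : Sig} {I : Interp σ} (R : Set (Rule σ)) (hR : GoodRules R I)
    (lam : SymHeap σ) (st : Store I) (h : Heap I) (hsat : SatH R I st h lam) :
    ∀ l ∈ Heap.ref h, ∃ x ∈ SymHeap.alloc lam,
      Relation.ReflTransGen (Heap.conn h) (st σ.loc x) l :=
  SatS.exists_mem_alloc_reflTransGen_conn hR.prules hsat.1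

end SLID
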